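/- Let δ: ℝ^d → ℝ be Lipschitz continuous with |∇δ(x)| ≤ c < 1 for almost every x, and let φ: ℝ^d → ℝ_{≥0} be smooth with ∫φ = 1 and support contained in the unit ball B(0,1). Then for every f ∈ L¹(ℝ^d): (1/(1+c))‖f‖_{L¹} ≤ ∫_{ℝ^d} ∫_{B(0,1)} |f(x - δ(x)y)| φ(y) dy dx ≤ (1/(1-c))‖f‖_{L¹}. -/

import Mathlib

open MeasureTheory Metric
open scoped NNReal ENNReal

theorem lipschitz_image_null {d : ℕ} {K : ℝ≥0} {g : EuclideanSpace ℝ (Fin d) → EuclideanSpace ℝ (Fin d)}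
    (hg : LipschitzWith K g) {N : Set (EuclideanSpace ℝ (Fin d))} (hN : volume N = 0) :
    volume (g '' N) = 0 := by
  rcases Nat.eq_zero_or_pos d with hd | hd
  · subst hd
    haveI : Subsingleton (EuclideanSpace ℝ (Fin 0)) :=
      ⟨fun x y => PiLp.ext (fun i => Fin.elim0 i)⟩
    rcases N.eq_empty_or_nonempty with h | ⟨a, ha⟩
    · simp [h]
    · have hsub : g '' N ⊆ N := fun x _ => (Subsingleton.elim x a) ▸ ha
      exact le_antisymm ((measure_mono hsub).trans hN.le) zero_le
  · haveI : Nonempty (Fin d) := ⟨⟨0, hd⟩⟩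
    obtain ⟨M, hNM, hMmeas, hM0⟩ := exists_measurable_superset_of_null hN
    set e := (MeasurableEquiv.toLp 2 (Fin d → ℝ)).symm with he
    have hecoe : ⇑e = (@WithLp.ofLp 2 (Fin d → ℝ)) := rfl
    have hesymm : ⇑e.symm = (@WithLp.toLp 2 (Fin d → ℝ)) := rfl
    set C : ℝ≥0 := (Fintype.card (Fin d) : ℝ≥0) ^ ((1 : ℝ≥0∞)/2).toReal with hC
    have h1 : LipschitzWith 1 ⇑e := hecoe ▸ PiLp.lipschitzWith_ofLp 2 _
    have h2 : LipschitzWith C ⇑e.symm := by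
      rw [hesymm]
      exact PiLp.lipschitzWith_toLp 2 _
    set G : (Fin d → ℝ) → (Fin d → ℝ) := fun x => e (g (e.symm x)) with hG
    have hGlip : LipschitzWith (1 * (K * C)) G := h1.comp (hg.comp h2)
    have hMpi : volume (⇑e '' M) = 0 := by
      have himg : ⇑e '' M = ⇑e.symm ⁻¹' M := Equiv.image_eq_preimage_symm e.toEquiv M
      rw [himg, ((EuclideanSpace.volume_preserving_symm_measurableEquiv_toLp (Fin d)).symm e).measure_preimage
        hMmeas.nullMeasurableSet]
      exact hM0
    have hkey : volume (G '' (⇑e '' M)) = 0 := by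
      refine le_antisymm ?_ zero_le
      have hvol : (volume : Measure (Fin d → ℝ)) = μH[(Fintype.card (Fin d) : ℝ)] :=
        (hausdorffMeasure_pi_real).symm
      have hd0 : (0:ℝ) ≤ (Fintype.card (Fin d) : ℝ) := by positivity
      calc volume (G '' (⇑e '' M)) = μH[(Fintype.card (Fin d) : ℝ)] (G '' (⇑e '' M)) := by rw [hvol]
        _ ≤ (1 * (K * C) : ℝ≥0) ^ (Fintype.card (Fin d) : ℝ) * μH[(Fintype.card (Fin d) : ℝ)] (⇑e '' M) :=
            hGlip.hausdorffMeasure_image_le hd0 _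
        _ = (1 * (K * C) : ℝ≥0) ^ (Fintype.card (Fin d) : ℝ) * volume (⇑e '' M) := by rw [hvol]
        _ = 0 := by rw [hMpi, mul_zero]
    have himg2 : ⇑e '' (g '' M) = G '' (⇑e '' M) := by
      rw [Set.image_image, Set.image_image]
      congr 1
    obtain ⟨T, hTsub, hTmeas, hT0⟩ := exists_measurable_superset_of_null (himg2 ▸ hkey)
    have hsub : g '' N ⊆ ⇑e ⁻¹' T := by
      intro x hx
      have : e x ∈ ⇑e '' (g '' M) := ⟨x, Set.image_mono hNM hx, rfl⟩
      exact hTsub this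
    refine le_antisymm (le_trans (measure_mono hsub) ?_) zero_le
    rw [(EuclideanSpace.volume_preserving_symm_measurableEquiv_toLp (Fin d)).measure_preimage
      hTmeas.nullMeasurableSet]
    exact hT0.le

theorem det_id_sub_smulRight {M : Type*} [AddCommGroup M] [Module ℝ M] {ι : Type*} [Fintype ι]
    [DecidableEq ι] (b : Module.Basis ι ℝ M) (u : M →ₗ[ℝ] ℝ) (y : M) :
    LinearMap.det (LinearMap.id - u.smulRight y) = 1 - u y := by
  rw [← LinearMap.det_toMatrix b]
  have hm : (LinearMap.toMatrix b b) (LinearMap.id - u.smulRight y)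
      = 1 + Matrix.replicateCol (Fin 1) (fun i => b.repr y i) * Matrix.replicateRow (Fin 1) (fun j => -u (b j)) := by
    ext i j
    simp [LinearMap.toMatrix_apply, Matrix.one_apply, Matrix.mul_apply, Matrix.replicateCol_apply,
      Matrix.replicateRow_apply, Finsupp.single_apply, sub_eq_add_neg, mul_comm, eq_comm]
  rw [hm]; erw [Matrix.det_one_add_replicateCol_mul_replicateRow (ι := Fin 1)]
  have hy : u y = ∑ i, b.repr y i * u (b i) := by
    conv_lhs => rw [← b.sum_repr y]
    simp [map_sum, smul_eq_mul, -Module.Basis.sum_repr]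
  simp only [dotProduct, hy]
  rw [Finset.sum_congr rfl (fun i _ => mul_comm ((b.repr y) i) (u (b i)))]
  simp [sub_eq_add_neg, Finset.sum_neg_distrib]

theorem clm_det_id_sub_smulRight {d : ℕ} (u : EuclideanSpace ℝ (Fin d) →L[ℝ] ℝ)
    (y : EuclideanSpace ℝ (Fin d)) :
    (ContinuousLinearMap.id ℝ (EuclideanSpace ℝ (Fin d)) - u.smulRight y).det = 1 - u y := by
  have hcoe : ((ContinuousLinearMap.id ℝ (EuclideanSpace ℝ (Fin d)) - u.smulRight y :
      EuclideanSpace ℝ (Fin d) →L[ℝ] EuclideanSpace ℝ (Fin d)) :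
      EuclideanSpace ℝ (Fin d) →ₗ[ℝ] EuclideanSpace ℝ (Fin d))
      = LinearMap.id - (u : EuclideanSpace ℝ (Fin d) →ₗ[ℝ] ℝ).smulRight y := by
    ext v
    simp
  show LinearMap.det _ = _
  rw [hcoe, det_id_sub_smulRight ((EuclideanSpace.basisFun (Fin d) ℝ).toBasis)]
  rfl

theorem g_bilip {d : ℕ} (δ : EuclideanSpace ℝ (Fin d) → ℝ) (c : ℝ) (hc : c < 1) (hc0 : 0 ≤ c)
    (hδLip : LipschitzWith (Real.toNNReal c) δ) (y : EuclideanSpace ℝ (Fin d)) (hy : ‖y‖ ≤ 1) :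
    LipschitzWith (Real.toNNReal (1 + c)) (fun x => x - δ x • y) ∧
    AntilipschitzWith (Real.toNNReal (1 - c))⁻¹ (fun x => x - δ x • y) ∧
    Function.Bijective (fun x => x - δ x • y) := by
  have hδd : ∀ x x' : EuclideanSpace ℝ (Fin d), |δ x - δ x'| ≤ c * dist x x' := by
    intro x x'
    have := hδLip.dist_le_mul x x'
    rwa [Real.dist_eq, Real.coe_toNNReal c hc0] at this
  have hdiff : ∀ x x' : EuclideanSpace ℝ (Fin d),
      (x - δ x • y) - (x' - δ x' • y) = (x - x') - (δ x - δ x') • y := by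
    intro x x'; rw [sub_smul]; abel
  have hsmul : ∀ x x' : EuclideanSpace ℝ (Fin d), ‖(δ x - δ x') • y‖ ≤ c * dist x x' := by
    intro x x'
    rw [norm_smul, Real.norm_eq_abs]
    calc |δ x - δ x'| * ‖y‖ ≤ (c * dist x x') * 1 :=
          mul_le_mul (hδd x x') hy (norm_nonneg _) (by positivity)
      _ = c * dist x x' := mul_one _
  have hLip : LipschitzWith (Real.toNNReal (1 + c)) (fun x => x - δ x • y) := by
    apply LipschitzWith.of_dist_le_mul
    intro x x'
    rw [Real.coe_toNNReal _ (by linarith), dist_eq_norm, hdiff]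
    calc ‖(x - x') - (δ x - δ x') • y‖ ≤ ‖x - x'‖ + ‖(δ x - δ x') • y‖ := norm_sub_le _ _
      _ ≤ dist x x' + c * dist x x' := by
          rw [← dist_eq_norm]; exact add_le_add le_rfl (hsmul x x')
      _ = (1 + c) * dist x x' := by ring
  have hAnti : AntilipschitzWith (Real.toNNReal (1 - c))⁻¹ (fun x => x - δ x • y) := by
    rw [antilipschitzWith_iff_le_mul_dist]
    intro x x'
    rw [NNReal.coe_inv, Real.coe_toNNReal _ (by linarith), dist_eq_norm (x - δ x • y), hdiff]
    have h1 : (1 - c) * dist x x' ≤ ‖(x - x') - (δ x - δ x') • y‖ := by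
      have h2 : ‖x - x'‖ - ‖(δ x - δ x') • y‖ ≤ ‖(x - x') - (δ x - δ x') • y‖ :=
        norm_sub_norm_le _ _
      have h3 := hsmul x x'
      rw [← dist_eq_norm] at h2
      linarith
    have hpos : (0:ℝ) < 1 - c := by linarith
    rw [inv_mul_eq_div, le_div_iff₀ hpos]
    linarith [h1]
  refine ⟨hLip, hAnti, hAnti.injective, ?_⟩
  intro z
  set F : EuclideanSpace ℝ (Fin d) → EuclideanSpace ℝ (Fin d) := fun x => z + δ x • y with hF
  have hFLip : LipschitzWith (Real.toNNReal c * ‖y‖₊) F := by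
    apply LipschitzWith.of_dist_le_mul
    intro x x'
    have : F x - F x' = (δ x - δ x') • y := by
      show (z + δ x • y) - (z + δ x' • y) = _
      rw [sub_smul]; abel
    rw [dist_eq_norm, this, norm_smul, Real.norm_eq_abs, NNReal.coe_mul,
      Real.coe_toNNReal _ hc0, coe_nnnorm]
    calc |δ x - δ x'| * ‖y‖ ≤ (c * dist x x') * ‖y‖ :=
          mul_le_mul_of_nonneg_right (hδd x x') (norm_nonneg _)
      _ = c * ‖y‖ * dist x x' := by ring
  have hcontr : ContractingWith (Real.toNNReal c * ‖y‖₊) F := by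
    refine ⟨?_, hFLip⟩
    rw [← NNReal.coe_lt_one, NNReal.coe_mul, Real.coe_toNNReal _ hc0, coe_nnnorm]
    calc c * ‖y‖ ≤ c * 1 := mul_le_mul_of_nonneg_left hy hc0
      _ = c := mul_one c
      _ < 1 := hc
  set x₀ := ContractingWith.fixedPoint F hcontr with hx₀
  have hfix : z + δ x₀ • y = x₀ := hcontr.fixedPoint_isFixedPt
  refine ⟨x₀, ?_⟩
  show x₀ - δ x₀ • y = z
  exact (eq_sub_of_add_eq hfix).symm

theorem key_estimate {d : ℕ} (δ : EuclideanSpace ℝ (Fin d) → ℝ) (c : ℝ) (hc : c < 1) (hc0 : 0 ≤ c)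
    (hδLip : LipschitzWith (Real.toNNReal c) δ)
    (hδgrad : ∀ᵐ x : EuclideanSpace ℝ (Fin d), ‖fderiv ℝ δ x‖ ≤ c)
    (f' : EuclideanSpace ℝ (Fin d) → ℝ) (hmf' : StronglyMeasurable f') (hif' : Integrable f')
    (y : EuclideanSpace ℝ (Fin d)) (hy : ‖y‖ ≤ 1) :
    Integrable (fun x => |f' (x - δ x • y)|) ∧
      (1 - c) * (∫ x, |f' (x - δ x • y)|) ≤ (∫ x, |f' x|) ∧
      (∫ x, |f' x|) ≤ (1 + c) * (∫ x, |f' (x - δ x • y)|) := by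
  obtain ⟨hgLip, hgAnti, hgBij⟩ := g_bilip δ c hc hc0 hδLip y hy
  set g : EuclideanSpace ℝ (Fin d) → EuclideanSpace ℝ (Fin d) := fun x => x - δ x • y with hg
  have hgcont : Continuous g := continuous_id.sub (hδLip.continuous.smul continuous_const)
  set s : Set (EuclideanSpace ℝ (Fin d)) :=
    {x | DifferentiableAt ℝ δ x} ∩ {x | ‖fderiv ℝ δ x‖ ≤ c} with hsdef
  have hs : MeasurableSet s := (measurableSet_of_differentiableAt ℝ δ).inter
    (measurableSet_le (measurable_fderiv ℝ δ).norm measurable_const)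
  have hsae : ∀ᵐ x : EuclideanSpace ℝ (Fin d), x ∈ s := by
    filter_upwards [hδLip.ae_differentiableAt, hδgrad] with x h1 h2
    exact ⟨h1, h2⟩
  have hscompl : volume sᶜ = 0 := by
    have := ae_iff.1 hsae
    simpa [Set.compl_def] using this
  set D : EuclideanSpace ℝ (Fin d) → (EuclideanSpace ℝ (Fin d) →L[ℝ] EuclideanSpace ℝ (Fin d)) :=
    fun x => ContinuousLinearMap.id ℝ (EuclideanSpace ℝ (Fin d)) - (fderiv ℝ δ x).smulRight y
    with hD
  have hDd : ∀ x ∈ s, HasFDerivWithinAt g (D x) s x := fun x hx =>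
    ((hasFDerivAt_id x).sub ((hx.1.hasFDerivAt).smul_const y)).hasFDerivWithinAt
  have hdetb : ∀ x ∈ s, 1 - c ≤ (D x).det ∧ (D x).det ≤ 1 + c := by
    intro x hx
    have hb : |fderiv ℝ δ x y| ≤ c := by
      calc |fderiv ℝ δ x y| ≤ ‖fderiv ℝ δ x‖ * ‖y‖ := (fderiv ℝ δ x).le_opNorm y
        _ ≤ c * 1 := mul_le_mul hx.2 hy (norm_nonneg _) hc0
        _ = c := mul_one c
    have hdet : (D x).det = 1 - fderiv ℝ δ x y := clm_det_id_sub_smulRight _ y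
    rw [hdet]
    obtain ⟨h1, h2⟩ := abs_le.1 hb
    constructor <;> linarith
  have habs : ∀ x ∈ s, |(D x).det| = (D x).det := fun x hx =>
    abs_of_nonneg (by linarith [(hdetb x hx).1])
  have hInjOn : Set.InjOn g s := hgAnti.injective.injOn
  -- change of variables
  have hCoV := integral_image_eq_integral_abs_det_fderiv_smul volume hs hDd hInjOn
    (fun x => |f' x|)
  have hCoVInt : IntegrableOn (fun x => |(D x).det| • |f' (g x)|) s volume :=
    (integrableOn_image_iff_integrableOn_abs_det_fderiv_smul volume hs hDd hInjOn
      (fun x => |f' x|)).1 hif'.abs.integrableOn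
  have hmcomp : AEStronglyMeasurable (fun x => |f' (g x)|) (volume.restrict s) := by
    have := ((hmf'.comp_measurable hgcont.measurable).norm).aestronglyMeasurable
      (μ := volume.restrict s)
    simpa [Real.norm_eq_abs, Function.comp] using this
  have h1c : (0:ℝ) < 1 - c := by linarith
  -- integrability of |f' ∘ g| on s
  have hIntOn : IntegrableOn (fun x => |f' (g x)|) s volume := by
    refine Integrable.mono' (hCoVInt.const_mul (1 - c)⁻¹) hmcomp ?_
    refine (ae_restrict_iff' hs).2 (ae_of_all _ fun x hx => ?_)
    have h1 : 1 - c ≤ |(D x).det| := by rw [habs x hx]; exact (hdetb x hx).1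
    have h2 : (1 - c) * |f' (g x)| ≤ |(D x).det| * |f' (g x)| :=
      mul_le_mul_of_nonneg_right h1 (abs_nonneg _)
    rw [Real.norm_eq_abs, abs_abs]
    calc |f' (g x)| = (1 - c)⁻¹ * ((1 - c) * |f' (g x)|) := by field_simp
      _ ≤ (1 - c)⁻¹ * (|(D x).det| * |f' (g x)|) :=
          mul_le_mul_of_nonneg_left h2 (by positivity)
      _ = (1 - c)⁻¹ * (|(D x).det| • |f' (g x)|) := by rw [smul_eq_mul]
  have hIntFull : Integrable (fun x => |f' (g x)|) := by
    have hc2 : IntegrableOn (fun x => |f' (g x)|) sᶜ volume := by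
      rw [IntegrableOn, Measure.restrict_zero_set hscompl]
      exact integrable_zero_measure
    have := hIntOn.union hc2
    rwa [Set.union_compl_self, integrableOn_univ] at this
  -- measure identities
  have hrs : volume.restrict s = volume := Measure.restrict_eq_self_of_ae_mem hsae
  have himgcompl : volume ((g '' s)ᶜ) = 0 := by
    rw [← Set.image_compl_eq hgBij]
    exact lipschitz_image_null hgLip hscompl
  have himgae : ∀ᵐ x : EuclideanSpace ℝ (Fin d), x ∈ g '' s := by
    rw [ae_iff]
    simpa [Set.compl_def] using himgcompl
  have hrimg : volume.restrict (g '' s) = volume := Measure.restrict_eq_self_of_ae_mem himgae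
  -- the CoV identity in usable form
  have hA : (∫ x, |f' x|) = ∫ x in s, |(D x).det| * |f' (g x)| := by
    calc (∫ x, |f' x|) = ∫ x in g '' s, |f' x| := by rw [hrimg]
      _ = ∫ x in s, |(D x).det| • |f' (g x)| := hCoV
      _ = ∫ x in s, |(D x).det| * |f' (g x)| := by simp [smul_eq_mul]
  have hJ : (∫ x, |f' (g x)|) = ∫ x in s, |f' (g x)| := by rw [hrs]
  refine ⟨hIntFull, ?_, ?_⟩
  · -- (1-c) * J ≤ A
    rw [hA, hJ, ← integral_const_mul]
    refine setIntegral_mono_on (hIntOn.const_mul _) hCoVInt hs fun x hx => ?_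
    have h1 : 1 - c ≤ |(D x).det| := by rw [habs x hx]; exact (hdetb x hx).1
    exact mul_le_mul_of_nonneg_right h1 (abs_nonneg _)
  · -- A ≤ (1+c) * J
    rw [hA, hJ, ← integral_const_mul]
    refine setIntegral_mono_on hCoVInt (hIntOn.const_mul _) hs fun x hx => ?_
    have h1 : |(D x).det| ≤ 1 + c := by rw [habs x hx]; exact (hdetb x hx).2
    exact mul_le_mul_of_nonneg_right h1 (abs_nonneg _)

/-- Key mollification lemma: the L¹ norm of the varying-radius mollified function is
comparable to the L¹ norm of the original function. -/
theorem mollification_L1_bound {d : ℕ}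
    (δ : EuclideanSpace ℝ (Fin d) → ℝ) (c : ℝ) (hc : c < 1) (hc0 : 0 ≤ c)
    (hδLip : LipschitzWith (Real.toNNReal c) δ)
    (hδgrad : ∀ᵐ x : EuclideanSpace ℝ (Fin d), ‖fderiv ℝ δ x‖ ≤ c)
    (φ : EuclideanSpace ℝ (Fin d) → ℝ)
    (hφsmooth : ContDiff ℝ (⊤ : ℕ∞) φ) (hφ0 : ∀ y, 0 ≤ φ y)
    (hφmass : ∫ y, φ y = 1) (hφsupp : Function.support φ ⊆ ball 0 1)
    (f : EuclideanSpace ℝ (Fin d) → ℝ) (hf : Integrable f) :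
    (1 / (1 + c)) * ∫ x, |f x| ≤
        (∫ x, ∫ y in ball (0 : EuclideanSpace ℝ (Fin d)) 1, |f (x - δ x • y)| * φ y) ∧
    (∫ x, ∫ y in ball (0 : EuclideanSpace ℝ (Fin d)) 1, |f (x - δ x • y)| * φ y) ≤
        (1 / (1 - c)) * ∫ x, |f x| := by
  have h1c : (0:ℝ) < 1 - c := by linarith
  have h1c' : (0:ℝ) < 1 + c := by linarith
  -- measurable representative
  set f' : EuclideanSpace ℝ (Fin d) → ℝ := hf.1.mk f with hf'def
  have hmf' : StronglyMeasurable f' := hf.1.stronglyMeasurable_mk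
  have hfeq : f =ᵐ[volume] f' := hf.1.ae_eq_mk
  have hif' : Integrable f' := hf.congr hfeq
  have hAeq : (∫ x, |f x|) = ∫ x, |f' x| :=
    integral_congr_ae (hfeq.mono fun x hx => by dsimp only; rw [hx])
  set A : ℝ := ∫ x, |f' x| with hA
  have hA0 : 0 ≤ A := integral_nonneg fun x => abs_nonneg _
  -- φ facts
  have hφcont : Continuous φ := hφsmooth.continuous
  have hφcs : HasCompactSupport φ := by
    refine IsCompact.of_isClosed_subset (isCompact_closedBall (0:EuclideanSpace ℝ (Fin d)) 1)
      isClosed_closure ?_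
    exact closure_minimal (hφsupp.trans ball_subset_closedBall) isClosed_closedBall
  have hφint : Integrable φ := hφcont.integrable_of_hasCompactSupport hφcs
  have hφball : (∫ y in ball (0 : EuclideanSpace ℝ (Fin d)) 1, φ y) = 1 := by
    rw [← integral_indicator measurableSet_ball, Set.indicator_eq_self.2 hφsupp, hφmass]
  set ν : Measure (EuclideanSpace ℝ (Fin d)) :=
    volume.restrict (ball (0 : EuclideanSpace ℝ (Fin d)) 1) with hν
  have hνball : ∀ᵐ y ∂ν, ‖y‖ ≤ 1 := by
    filter_upwards [ae_restrict_mem measurableSet_ball] with y hy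
    rw [mem_ball, dist_zero_right] at hy
    exact hy.le
  -- map measurability
  have hmcont : Continuous (fun p : EuclideanSpace ℝ (Fin d) × EuclideanSpace ℝ (Fin d) =>
      p.1 - δ p.1 • p.2) :=
    continuous_fst.sub ((hδLip.continuous.comp continuous_fst).smul continuous_snd)
  -- the bad set is product-null
  set N : Set (EuclideanSpace ℝ (Fin d)) := toMeasurable volume {x | f x ≠ f' x} with hNdef
  have hNmeas : MeasurableSet N := measurableSet_toMeasurable _ _
  have hN0 : volume N = 0 := by
    rw [measure_toMeasurable]
    exact ae_iff.1 hfeq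
  have hNsub : {x | f x ≠ f' x} ⊆ N := subset_toMeasurable _ _
  set B : Set (EuclideanSpace ℝ (Fin d) × EuclideanSpace ℝ (Fin d)) :=
    {p | p.1 - δ p.1 • p.2 ∈ N} with hBdef
  have hBmeas : MeasurableSet B := hmcont.measurable hNmeas
  have hslice : ∀ y : EuclideanSpace ℝ (Fin d), ‖y‖ ≤ 1 →
      volume ((fun x => (x, y)) ⁻¹' B) = 0 := by
    intro y hy
    obtain ⟨hgLip, hgAnti, hgBij⟩ := g_bilip δ c hc hc0 hδLip y hy
    set eg := Equiv.ofBijective _ hgBij with heg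
    have hpre : ((fun x => (x, y)) ⁻¹' B) = ⇑eg.symm '' N := by
      rw [Equiv.image_eq_preimage_symm]
      ext x
      simp [hBdef, heg, Equiv.ofBijective]
    rw [hpre]
    have hsymmLip : LipschitzWith (Real.toNNReal (1 - c))⁻¹ ⇑eg.symm :=
      hgAnti.to_rightInverse eg.apply_symm_apply
    exact lipschitz_image_null hsymmLip hN0
  have hBnull : (volume.prod ν) B = 0 := by
    rw [Measure.prod_apply_symm hBmeas]
    have hz : (fun y => volume ((fun x => (x, y)) ⁻¹' B)) =ᵐ[ν] 0 := by
      filter_upwards [hνball] with y hy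
      exact hslice y hy
    rw [lintegral_congr_ae hz]
    simp
  have hBslices : ∀ᵐ x : EuclideanSpace ℝ (Fin d), ν (Prod.mk x ⁻¹' B) = 0 :=
    (Measure.measure_prod_null hBmeas).1 hBnull
  -- Step A : replace f by f'
  have hIeq : (∫ x, ∫ y in ball (0 : EuclideanSpace ℝ (Fin d)) 1, |f (x - δ x • y)| * φ y)
      = ∫ x, ∫ y in ball (0 : EuclideanSpace ℝ (Fin d)) 1, |f' (x - δ x • y)| * φ y := by
    refine integral_congr_ae ?_
    filter_upwards [hBslices] with x hx
    refine integral_congr_ae ?_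
    have hy' : ∀ᵐ y ∂ν, y ∉ Prod.mk x ⁻¹' B := measure_eq_zero_iff_ae_notMem.1 hx
    filter_upwards [hy'] with y hy
    have : f (x - δ x • y) = f' (x - δ x • y) := by
      by_contra hne
      exact hy (hNsub hne)
    rw [this]
  -- Fubini setup
  set Fn : EuclideanSpace ℝ (Fin d) × EuclideanSpace ℝ (Fin d) → ℝ :=
    fun p => |f' (p.1 - δ p.1 • p.2)| * φ p.2 with hFndef
  have hFnSM : StronglyMeasurable Fn := by
    have h1 : Measurable fun p : EuclideanSpace ℝ (Fin d) × EuclideanSpace ℝ (Fin d) =>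
        |f' (p.1 - δ p.1 • p.2)| := (hmf'.measurable.comp hmcont.measurable).abs
    exact (h1.mul (hφcont.measurable.comp measurable_snd)).stronglyMeasurable
  have hkey : ∀ y : EuclideanSpace ℝ (Fin d), ‖y‖ ≤ 1 →
      Integrable (fun x => |f' (x - δ x • y)|) ∧
      (1 - c) * (∫ x, |f' (x - δ x • y)|) ≤ A ∧
      A ≤ (1 + c) * (∫ x, |f' (x - δ x • y)|) :=
    fun y hy => key_estimate δ c hc hc0 hδLip hδgrad f' hmf' hif' y hy
  have hJub : ∀ y : EuclideanSpace ℝ (Fin d), ‖y‖ ≤ 1 →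
      (∫ x, |f' (x - δ x • y)|) ≤ (1 - c)⁻¹ * A := by
    intro y hy
    obtain ⟨-, h1, -⟩ := hkey y hy
    rw [← le_div_iff₀' h1c] at h1
    rw [div_eq_inv_mul] at h1
    exact h1
  have hJlb : ∀ y : EuclideanSpace ℝ (Fin d), ‖y‖ ≤ 1 →
      (1 + c)⁻¹ * A ≤ ∫ x, |f' (x - δ x • y)| := by
    intro y hy
    obtain ⟨-, -, h2⟩ := hkey y hy
    rw [← div_le_iff₀' h1c'] at h2
    rw [div_eq_inv_mul] at h2
    exact h2
  have hJ0 : ∀ y : EuclideanSpace ℝ (Fin d), 0 ≤ ∫ x, |f' (x - δ x • y)| :=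
    fun y => integral_nonneg fun x => abs_nonneg _
  have hFnInt : Integrable Fn (volume.prod ν) := by
    refine (integrable_prod_iff' hFnSM.aestronglyMeasurable).2 ⟨?_, ?_⟩
    · filter_upwards [hνball] with y hy
      exact ((hkey y hy).1).mul_const (φ y)
    · refine Integrable.mono' ((hφint.integrableOn).const_mul ((1 - c)⁻¹ * A))
        (hFnSM.norm.integral_prod_left').aestronglyMeasurable ?_
      filter_upwards [hνball] with y hy
      have heval : (∫ x, ‖Fn (x, y)‖) = (∫ x, |f' (x - δ x • y)|) * φ y := by
        rw [← integral_mul_const]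
        refine integral_congr_ae (ae_of_all _ fun x => ?_)
        simp only [hFndef, Real.norm_eq_abs, abs_mul, abs_abs, abs_of_nonneg (hφ0 y)]
      rw [Real.norm_eq_abs, heval, abs_of_nonneg (mul_nonneg (hJ0 y) (hφ0 y))]
      exact mul_le_mul_of_nonneg_right (hJub y hy) (hφ0 y)
  have hswap : (∫ x, ∫ y in ball (0 : EuclideanSpace ℝ (Fin d)) 1, |f' (x - δ x • y)| * φ y)
      = ∫ y in ball (0 : EuclideanSpace ℝ (Fin d)) 1, ∫ x, |f' (x - δ x • y)| * φ y := by
    exact integral_integral_swap (f := fun x y => |f' (x - δ x • y)| * φ y) hFnInt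
  have hinner : ∀ y : EuclideanSpace ℝ (Fin d),
      (∫ x, |f' (x - δ x • y)| * φ y) = (∫ x, |f' (x - δ x • y)|) * φ y :=
    fun y => integral_mul_const _ _
  have hJφint : Integrable (fun y => (∫ x, |f' (x - δ x • y)|) * φ y) ν := by
    have := hFnInt.integral_prod_right
    refine this.congr (ae_of_all _ fun y => ?_)
    exact hinner y
  rw [hIeq, hswap]
  have hfinal : (∫ y in ball (0 : EuclideanSpace ℝ (Fin d)) 1, ∫ x, |f' (x - δ x • y)| * φ y)
      = ∫ y in ball (0 : EuclideanSpace ℝ (Fin d)) 1, (∫ x, |f' (x - δ x • y)|) * φ y :=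
    integral_congr_ae (ae_of_all _ fun y => hinner y)
  rw [hfinal, hAeq]
  constructor
  · -- lower bound
    have hle : (∫ y in ball (0 : EuclideanSpace ℝ (Fin d)) 1, ((1 + c)⁻¹ * A) * φ y)
        ≤ ∫ y in ball (0 : EuclideanSpace ℝ (Fin d)) 1, (∫ x, |f' (x - δ x • y)|) * φ y := by
      refine integral_mono_ae ((hφint.integrableOn).const_mul _) hJφint ?_
      filter_upwards [hνball] with y hy
      exact mul_le_mul_of_nonneg_right (hJlb y hy) (hφ0 y)
    calc (1 / (1 + c)) * A = ((1 + c)⁻¹ * A) * 1 := by rw [one_div]; ring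
      _ = ((1 + c)⁻¹ * A) * ∫ y in ball (0 : EuclideanSpace ℝ (Fin d)) 1, φ y := by rw [hφball]
      _ = ∫ y in ball (0 : EuclideanSpace ℝ (Fin d)) 1, ((1 + c)⁻¹ * A) * φ y :=
          (integral_const_mul _ _).symm
      _ ≤ _ := hle
  · -- upper bound
    have hle : (∫ y in ball (0 : EuclideanSpace ℝ (Fin d)) 1, (∫ x, |f' (x - δ x • y)|) * φ y)
        ≤ ∫ y in ball (0 : EuclideanSpace ℝ (Fin d)) 1, ((1 - c)⁻¹ * A) * φ y := by
      refine integral_mono_ae hJφint ((hφint.integrableOn).const_mul _) ?_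
      filter_upwards [hνball] with y hy
      exact mul_le_mul_of_nonneg_right (hJub y hy) (hφ0 y)
    calc (∫ y in ball (0 : EuclideanSpace ℝ (Fin d)) 1, (∫ x, |f' (x - δ x • y)|) * φ y)
        ≤ ∫ y in ball (0 : EuclideanSpace ℝ (Fin d)) 1, ((1 - c)⁻¹ * A) * φ y := hle
      _ = ((1 - c)⁻¹ * A) * ∫ y in ball (0 : EuclideanSpace ℝ (Fin d)) 1, φ y :=
          integral_const_mul _ _
      _ = ((1 - c)⁻¹ * A) * 1 := by rw [hφball]
      _ = (1 / (1 - c)) * A := by rw [one_div]; ring
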